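/- A signed cubic graph admits a nowhere-zero 3-flow if and only if it is antibalanced and its underlying graph has a perfect matching. -/

import Mathlib

open Finset

/-- A signed multigraph on vertex type `V` with edge type `E`:
each edge has an ordered pair of endpoints and a sign (`neg e = true` means negative). -/
structure SignedMultigraph (V E : Type) where
  ends : E → V × V
  neg : E → Bool

namespace SignedMultigraph

variable {V E : Type} [Fintype V] [Fintype E] [DecidableEq V] [DecidableEq E]

/-- Degree of `v` in the edge subset `F` (loops count twice). -/
def degIn (G : SignedMultigraph V E) (F : Finset E) (v : V) : ℕ :=
  ∑ e ∈ F, ((if (G.ends e).1 = v then 1 else 0) + (if (G.ends e).2 = v then 1 else 0))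

/-- Adjacency via an edge of `F`. -/
def adj (G : SignedMultigraph V E) (F : Finset E) (v w : V) : Prop :=
  ∃ e ∈ F, G.ends e = (v, w) ∨ G.ends e = (w, v)

/-- Vertices incident with an edge of `F`. -/
def supp (G : SignedMultigraph V E) (F : Finset E) : Set V :=
  {v | ∃ e ∈ F, (G.ends e).1 = v ∨ (G.ends e).2 = v}

/-- Reachability using edges of `F`. -/
def reach (G : SignedMultigraph V E) (F : Finset E) : V → V → Prop :=
  Relation.ReflTransGen (G.adj F)

/-- `F` is (the edge set of) a circuit: nonempty, every vertex has degree 0 or 2,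
and the support is connected. -/
def IsCircuit (G : SignedMultigraph V E) (F : Finset E) : Prop :=
  F.Nonempty ∧ (∀ v, G.degIn F v = 0 ∨ G.degIn F v = 2) ∧
    ∀ v ∈ G.supp F, ∀ w ∈ G.supp F, G.reach F v w

/-- The negative edges inside `F`. -/
def negEdges (G : SignedMultigraph V E) (F : Finset E) : Finset E :=
  F.filter (fun e => G.neg e = true)

def IsBalancedCircuit (G : SignedMultigraph V E) (F : Finset E) : Prop :=
  G.IsCircuit F ∧ Even (G.negEdges F).card

def IsUnbalancedCircuit (G : SignedMultigraph V E) (F : Finset E) : Prop :=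
  G.IsCircuit F ∧ Odd (G.negEdges F).card

/-- A signed graph is balanced if every circuit has an even number of negative edges. -/
def Balanced (G : SignedMultigraph V E) : Prop :=
  ∀ F : Finset E, G.IsCircuit F → Even (G.negEdges F).card

/-- `P` is the edge set of a path from `v₁` to `v₂` (trivial iff `v₁ = v₂`). -/
def IsPathBetween (G : SignedMultigraph V E) (P : Finset E) (v₁ v₂ : V) : Prop :=
  if v₁ = v₂ then P = ∅ else
    G.degIn P v₁ = 1 ∧ G.degIn P v₂ = 1 ∧
    (∀ v, v ≠ v₁ → v ≠ v₂ → G.degIn P v = 0 ∨ G.degIn P v = 2) ∧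
    ∀ v ∈ G.supp P, ∀ w ∈ G.supp P, G.reach P v w

/-- `F` is a barbell: two unbalanced circuits joined by a (possibly trivial) path. -/
def IsBarbell (G : SignedMultigraph V E) (F : Finset E) : Prop :=
  ∃ (C₁ C₂ P : Finset E) (v₁ v₂ : V),
    G.IsUnbalancedCircuit C₁ ∧ G.IsUnbalancedCircuit C₂ ∧
    G.IsPathBetween P v₁ v₂ ∧ v₁ ∈ G.supp C₁ ∧ v₂ ∈ G.supp C₂ ∧
    F = C₁ ∪ C₂ ∪ P ∧
    (G.supp C₁ \ {v₁}) ∩ G.supp (C₂ ∪ P) = ∅ ∧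
    (G.supp C₂ \ {v₂}) ∩ G.supp (C₁ ∪ P) = ∅

/-- A signed circuit is a balanced circuit or a barbell. -/
def IsSignedCircuit (G : SignedMultigraph V E) (F : Finset E) : Prop :=
  G.IsBalancedCircuit F ∨ G.IsBarbell F

/-- A bidirection `d` assigns to each half-edge a direction (`true` = toward its endpoint);
it is an orientation of the signed graph if negative edges are exactly the
extroverted/introverted ones. -/
def IsOrientation (G : SignedMultigraph V E) (d : E → Bool × Bool) : Prop :=
  ∀ e, G.neg e = true ↔ (d e).1 = (d e).2

/-- Net inflow at vertex `v` (incoming half-edges count `+φ e`, outgoing `-φ e`). -/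
def vertexSum {Γ : Type} [AddCommGroup Γ] (G : SignedMultigraph V E)
    (d : E → Bool × Bool) (φ : E → Γ) (v : V) : Γ :=
  ∑ e, ((if (G.ends e).1 = v then (if (d e).1 then φ e else -φ e) else 0) +
        (if (G.ends e).2 = v then (if (d e).2 then φ e else -φ e) else 0))

/-- `(d, φ)` is a flow: `d` is an orientation and Kirchhoff's law holds at every vertex. -/
def IsFlow {Γ : Type} [AddCommGroup Γ] (G : SignedMultigraph V E)
    (d : E → Bool × Bool) (φ : E → Γ) : Prop :=
  G.IsOrientation d ∧ ∀ v, G.vertexSum d φ v = 0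

/-- Nowhere-zero `Γ`-flow. -/
def HasNZGroupFlow (G : SignedMultigraph V E) (Γ : Type) [AddCommGroup Γ] : Prop :=
  ∃ (d : E → Bool × Bool) (φ : E → Γ), G.IsFlow d φ ∧ ∀ e, φ e ≠ 0

/-- Flow-admissible: has a nowhere-zero integer flow. -/
def FlowAdmissible (G : SignedMultigraph V E) : Prop :=
  ∃ (d : E → Bool × Bool) (φ : E → ℤ), G.IsFlow d φ ∧ ∀ e, φ e ≠ 0

/-- Nowhere-zero `k`-flow: integer flow with `0 < |φ e| < k`. -/
def HasNZkFlow (G : SignedMultigraph V E) (k : ℤ) : Prop :=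
  ∃ (d : E → Bool × Bool) (φ : E → ℤ), G.IsFlow d φ ∧ ∀ e, 0 < |φ e| ∧ |φ e| < k

/-- The flow number: least `k : ℕ` admitting a nowhere-zero `k`-flow. -/
noncomputable def flowNum (G : SignedMultigraph V E) : ℕ :=
  sInf {k : ℕ | G.HasNZkFlow (k : ℤ)}

/-- Circular `t`-flow: real flow with `1 ≤ |φ e| ≤ t - 1`. -/
def HasCircularFlow (G : SignedMultigraph V E) (t : ℝ) : Prop :=
  ∃ (d : E → Bool × Bool) (φ : E → ℝ), G.IsFlow d φ ∧ ∀ e, 1 ≤ |φ e| ∧ |φ e| ≤ t - 1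

/-- The circular flow number. -/
noncomputable def circFlowNum (G : SignedMultigraph V E) : ℝ :=
  sInf {t : ℝ | G.HasCircularFlow t}

/-- Bridgeless: the endpoints of each edge are joined by a path avoiding that edge. -/
def Bridgeless (G : SignedMultigraph V E) : Prop :=
  ∀ e : E, G.reach (Finset.univ.erase e) (G.ends e).1 (G.ends e).2

/-- Switching at a vertex `v`. -/
def switch (G : SignedMultigraph V E) (v : V) : SignedMultigraph V E where
  ends := G.ends
  neg := fun e => xor (G.neg e) (xor (decide ((G.ends e).1 = v)) (decide ((G.ends e).2 = v)))

/-- Switching equivalence of signed graphs on the same underlying graph. -/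
def Equivalent (G₁ G₂ : SignedMultigraph V E) : Prop :=
  Relation.ReflTransGen (fun H₁ H₂ => ∃ v : V, H₂ = H₁.switch v) G₁ G₂

/-- Antibalanced: switching-equivalent to an all-negative signed graph. -/
def Antibalanced (G : SignedMultigraph V E) : Prop :=
  ∃ G' : SignedMultigraph V E, G.Equivalent G' ∧ ∀ e, G'.neg e = true

/-- No vertex of the support of `S` is a source or a sink of `d` restricted to `S`. -/
def NoSourceSink (G : SignedMultigraph V E) (d : E → Bool × Bool) (S : Finset E) : Prop :=
  ∀ v ∈ G.supp S,
    (∃ e ∈ S, ((G.ends e).1 = v ∧ (d e).1 = true) ∨ ((G.ends e).2 = v ∧ (d e).2 = true)) ∧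
    (∃ e ∈ S, ((G.ends e).1 = v ∧ (d e).1 = false) ∨ ((G.ends e).2 = v ∧ (d e).2 = false))

/-- Zero-sum `k`-flow on the underlying (unsigned) graph. -/
def ZeroSumFlow (G : SignedMultigraph V E) (k : ℤ) : Prop :=
  ∃ f : E → ℤ, (∀ e, 1 ≤ |f e| ∧ |f e| ≤ k - 1) ∧
    ∀ v : V, (∑ e, ((if (G.ends e).1 = v then f e else 0) +
                    (if (G.ends e).2 = v then f e else 0))) = 0

end SignedMultigraph

/-!
At a vertex of a cubic graph, three values in `{±1, ±2}` (read with the signs given by the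
orientation of the half-edges) sum to zero only in the pattern `2ζ, -ζ, -ζ` with `ζ = ±1`. Hence
the edges carrying `±2` form a perfect matching, and both half-edges of an edge see the same
coefficient (`2` or `-1`), so the edge is negative, i.e. its half-edge values agree, exactly when
`ζ` agrees at its ends: switching at `{ζ = -1}` makes every edge negative. Conversely, after
switching to the all-negative graph, send `2` out of both ends of each matching edge and `1` into
both ends of every other edge.
-/

theorem exists_sign_of_sum_eq_zero_of_card_eq_three {ι : Type*} [DecidableEq ι] {s : Finset ι}
    (hs : #s = 3) {x : ι → ℤ} (hx : ∀ i ∈ s, 0 < |x i| ∧ |x i| < 3) (hsum : ∑ i ∈ s, x i = 0) :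
    #{i ∈ s | |x i| = 2} = 1 ∧
      ∃ ζ : ℤ, (ζ = 1 ∨ ζ = -1) ∧ ∀ i ∈ s, x i = if |x i| = 2 then 2 * ζ else -ζ := by
  obtain ⟨a, b, c, hab, hac, hbc, rfl⟩ := card_eq_three.1 hs
  have hval : ∀ i ∈ ({a, b, c} : Finset ι), x i = 1 ∨ x i = -1 ∨ x i = 2 ∨ x i = -2 := by
    intro i hi
    have := hx i hi
    rcases abs_cases (x i) with ⟨h, _⟩ | ⟨h, _⟩ <;> omega
  simp only [mem_insert, mem_singleton, forall_eq_or_imp, forall_eq] at hval ⊢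
  rw [card_filter, sum_insert (by simp [hab, hac]), sum_insert (by simp [hbc]), sum_singleton]
  rw [sum_insert (by simp [hab, hac]), sum_insert (by simp [hbc]), sum_singleton] at hsum
  -- the values are `2ζ, -ζ, -ζ` in some order, so their product is `2ζ³ = 2ζ`
  refine ⟨?_, x a * x b * x c / 2, ?_⟩ <;> revert hsum <;>
    obtain ⟨ha | ha | ha | ha, hb | hb | hb | hb, hc | hc | hc | hc⟩ := hval <;>
    norm_num [ha, hb, hc]

namespace SignedMultigraph

section HalfEdges

variable {V E : Type} (G : SignedMultigraph V E)

/-- `(e, true)` is the half-edge of `e` at `(G.ends e).1`, `(e, false)` the one at `(G.ends e).2`. -/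
def halfEnd (h : E × Bool) : V :=
  if h.2 then (G.ends h.1).1 else (G.ends h.1).2

def halfDir (d : E → Bool × Bool) (h : E × Bool) : Bool :=
  if h.2 then (d h.1).1 else (d h.1).2

def halfVal {Γ : Type} [Neg Γ] (d : E → Bool × Bool) (φ : E → Γ) (h : E × Bool) : Γ :=
  if halfDir d h then φ h.1 else -φ h.1

theorem abs_halfVal (d : E → Bool × Bool) (φ : E → ℤ) (h : E × Bool) :
    |halfVal d φ h| = |φ h.1| := by
  unfold halfVal
  split_ifs <;> simp

variable {G} in
theorem IsOrientation.neg_iff_halfVal_eq {d : E → Bool × Bool} (hd : G.IsOrientation d)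
    {φ : E → ℤ} {e : E} (he : φ e ≠ 0) :
    G.neg e = true ↔ halfVal d φ (e, true) = halfVal d φ (e, false) := by
  rw [hd e]
  simp only [halfVal, halfDir]
  cases (d e).1 <;> cases (d e).2 <;> simp <;> omega

def halfEdgesAt [Fintype E] [DecidableEq V] (v : V) : Finset (E × Bool) :=
  {h | G.halfEnd h = v}

variable [Fintype E] [DecidableEq V]

@[simp]
theorem mem_halfEdgesAt {v : V} {h : E × Bool} : h ∈ G.halfEdgesAt v ↔ G.halfEnd h = v := by
  simp [halfEdgesAt]

theorem sum_halfEdgesAt {M : Type} [AddCommMonoid M] (v : V) (f : E × Bool → M) :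
    ∑ h ∈ G.halfEdgesAt v, f h =
      ∑ e, ((if (G.ends e).1 = v then f (e, true) else 0) +
        (if (G.ends e).2 = v then f (e, false) else 0)) := by
  rw [halfEdgesAt, sum_filter, Fintype.sum_prod_type]
  simp [halfEnd]

theorem vertexSum_eq_sum_halfVal {Γ : Type} [AddCommGroup Γ] (d : E → Bool × Bool) (φ : E → Γ)
    (v : V) : G.vertexSum d φ v = ∑ h ∈ G.halfEdgesAt v, halfVal d φ h := by
  rw [sum_halfEdgesAt]
  rfl

theorem degIn_eq_card_halfEdgesAt [DecidableEq E] (F : Finset E) (v : V) :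
    G.degIn F v = #{h ∈ G.halfEdgesAt v | h.1 ∈ F} := by
  rw [card_filter, sum_halfEdgesAt, degIn]
  conv_lhs => rw [← univ_inter F, ← sum_ite_mem]
  refine sum_congr rfl fun e _ => ?_
  by_cases e ∈ F <;> simp [*]

theorem card_halfEdgesAt (v : V) : #(G.halfEdgesAt v) = G.degIn univ v := by
  classical
  rw [degIn_eq_card_halfEdgesAt, filter_true_of_mem fun h _ => mem_univ h.1]

end HalfEdges

section Switching

variable {V E : Type} [DecidableEq V] (G : SignedMultigraph V E)

def flipAt (d : E → Bool × Bool) (v : V) : E → Bool × Bool := fun e =>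
  (xor (decide ((G.ends e).1 = v)) (d e).1, xor (decide ((G.ends e).2 = v)) (d e).2)

theorem halfVal_flipAt {Γ : Type} [InvolutiveNeg Γ] (d : E → Bool × Bool) (φ : E → Γ) (v : V)
    (h : E × Bool) :
    halfVal (G.flipAt d v) φ h = if G.halfEnd h = v then -halfVal d φ h else halfVal d φ h := by
  obtain ⟨e, _ | _⟩ := h <;>
  · simp only [halfVal, halfDir, halfEnd, flipAt]
    split_ifs <;> simp_all

theorem switch_switch (v : V) : (G.switch v).switch v = G := by
  let s : E → Bool := fun e => xor (decide ((G.ends e).1 = v)) (decide ((G.ends e).2 = v))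
  change SignedMultigraph.mk G.ends (fun e => xor (xor (G.neg e) (s e)) (s e)) = G
  simp only [Bool.xor_assoc, Bool.xor_self, Bool.xor_false]

def switchSet (U : Finset V) : SignedMultigraph V E where
  ends := G.ends
  neg e := xor (G.neg e) (xor (decide ((G.ends e).1 ∈ U)) (decide ((G.ends e).2 ∈ U)))

theorem switchSet_insert (U : Finset V) {v : V} (hv : v ∉ U) :
    G.switchSet (insert v U) = (G.switchSet U).switch v := by
  let s : V → Bool := fun a => decide (a ∈ U)
  let t : V → Bool := fun a => decide (a = v)
  change _ = SignedMultigraph.mk G.ends (fun e => xor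
    (xor (G.neg e) (xor (s (G.ends e).1) (s (G.ends e).2))) (xor (t (G.ends e).1) (t (G.ends e).2)))
  have hmem : ∀ a : V, decide (a ∈ insert v U) = xor (t a) (s a) := by
    intro a
    by_cases a = v <;> simp_all [s, t]
  simp only [switchSet, hmem, Bool.xor_assoc, Bool.xor_comm, Bool.xor_left_comm]

theorem equivalent_switchSet (U : Finset V) : G.Equivalent (G.switchSet U) := by
  induction U using Finset.induction with
  | empty =>
    have hempty : G.switchSet ∅ = G := by simp [switchSet]
    rw [hempty]
    exact Relation.ReflTransGen.refl
  | insert v U hv ih =>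
    rw [switchSet_insert G U hv]
    exact ih.tail ⟨v, rfl⟩

/-- Switch at the endpoints outside `p`: this makes every edge negative. -/
theorem antibalanced_of_neg_iff [Fintype E] (p : V → Prop) [DecidablePred p]
    (h : ∀ e, G.neg e = true ↔ (p (G.ends e).1 ↔ p (G.ends e).2)) : G.Antibalanced := by
  let U : Finset V := {v ∈ univ.image G.halfEnd | ¬ p v}
  have hU : ∀ e (b : Bool), G.halfEnd (e, b) ∈ U ↔ ¬ p (G.halfEnd (e, b)) := by
    intro e b
    simp [U]
  refine ⟨G.switchSet U, G.equivalent_switchSet U, fun e => ?_⟩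
  have h1 := hU e true
  have h2 := hU e false
  simp only [halfEnd] at h1 h2
  have he := h e
  simp only [switchSet]
  revert h1 h2 he
  cases G.neg e <;> by_cases p (G.ends e).1 <;> by_cases p (G.ends e).2 <;> simp_all

variable {G}

theorem IsOrientation.switch {d : E → Bool × Bool} (hd : G.IsOrientation d) (v : V) :
    (G.switch v).IsOrientation (G.flipAt d v) := by
  intro e
  have hde := hd e
  simp only [SignedMultigraph.switch, flipAt]
  revert hde
  cases G.neg e <;> cases (d e).1 <;> cases (d e).2 <;> cases decide ((G.ends e).1 = v) <;>
    cases decide ((G.ends e).2 = v) <;> decide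

theorem IsFlow.switch [Fintype E] {Γ : Type} [AddCommGroup Γ] {d : E → Bool × Bool} {φ : E → Γ}
    (hf : G.IsFlow d φ) (v : V) : (G.switch v).IsFlow (G.flipAt d v) φ := by
  refine ⟨hf.1.switch v, fun w => ?_⟩
  have hw := hf.2 w
  rw [vertexSum_eq_sum_halfVal] at hw ⊢
  have hflip : ∀ h ∈ G.halfEdgesAt w,
      halfVal (G.flipAt d v) φ h = if w = v then -halfVal d φ h else halfVal d φ h := by
    intro h hh
    rw [halfVal_flipAt, (G.mem_halfEdgesAt).1 hh]
  change ∑ h ∈ G.halfEdgesAt w, _ = 0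
  rw [sum_congr rfl hflip]
  split_ifs <;> simp [sum_neg_distrib, hw]

theorem HasNZkFlow.switch [Fintype E] {k : ℤ} (hf : G.HasNZkFlow k) (v : V) :
    (G.switch v).HasNZkFlow k :=
  let ⟨d, φ, hflow, hφ⟩ := hf
  ⟨G.flipAt d v, φ, hflow.switch v, hφ⟩

theorem HasNZkFlow.of_equivalent [Fintype E] {G G' : SignedMultigraph V E} {k : ℤ}
    (h : G.Equivalent G') (hf : G'.HasNZkFlow k) : G.HasNZkFlow k := by
  induction h with
  | refl => exact hf
  | tail _ hstep ih =>
    obtain ⟨v, rfl⟩ := hstep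
    exact ih (by simpa only [switch_switch] using hf.switch v)

theorem Equivalent.ends_eq {G G' : SignedMultigraph V E} (h : G.Equivalent G') :
    G'.ends = G.ends := by
  induction h with
  | refl => rfl
  | tail _ hstep ih => obtain ⟨v, rfl⟩ := hstep; exact ih

theorem Equivalent.degIn_eq {G G' : SignedMultigraph V E} (h : G.Equivalent G') :
    G'.degIn = G.degIn := by
  unfold degIn
  rw [h.ends_eq]

end Switching

section Cubic

variable {V E : Type} [Fintype E] [DecidableEq V] (G : SignedMultigraph V E)

variable {G} in
theorem IsFlow.exists_sign_of_cubic (hcubic : ∀ v, G.degIn univ v = 3) {d : E → Bool × Bool}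
    {φ : E → ℤ} (hf : G.IsFlow d φ) (hφ : ∀ e, 0 < |φ e| ∧ |φ e| < 3) (v : V) :
    G.degIn {e | |φ e| = 2} v = 1 ∧ ∃ ζ : ℤ, (ζ = 1 ∨ ζ = -1) ∧
      ∀ h ∈ G.halfEdgesAt v, halfVal d φ h = if |φ h.1| = 2 then 2 * ζ else -ζ := by
  classical
  have hlocal := exists_sign_of_sum_eq_zero_of_card_eq_three
    ((G.card_halfEdgesAt v).trans (hcubic v)) (x := halfVal d φ)
    (fun h _ => abs_halfVal d φ h ▸ hφ h.1) ((G.vertexSum_eq_sum_halfVal d φ v).symm.trans (hf.2 v))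
  simp only [abs_halfVal] at hlocal
  rw [degIn_eq_card_halfEdgesAt]
  simpa only [mem_filter, mem_univ, true_and] using hlocal

theorem antibalanced_and_perfectMatching_of_hasNZkFlow_three (hcubic : ∀ v, G.degIn univ v = 3)
    (h : G.HasNZkFlow 3) : G.Antibalanced ∧ ∃ M : Finset E, ∀ v, G.degIn M v = 1 := by
  obtain ⟨d, φ, hf, hφ⟩ := h
  choose hM ζ hζ hval using hf.exists_sign_of_cubic hcubic hφ
  refine ⟨G.antibalanced_of_neg_iff (fun v => ζ v = 1) fun e => ?_, _, hM⟩
  rw [hf.1.neg_iff_halfVal_eq (abs_pos.1 (hφ e).1), hval (G.ends e).1 (e, true) (by simp [halfEnd]),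
    hval (G.ends e).2 (e, false) (by simp [halfEnd])]
  rcases hζ (G.ends e).1 with h1 | h1 <;> rcases hζ (G.ends e).2 with h2 | h2 <;>
    split_ifs <;> simp [h1, h2]

theorem hasNZkFlow_three_of_forall_neg (hneg : ∀ e, G.neg e = true)
    (hcubic : ∀ v, G.degIn univ v = 3) (M : Finset E) (hM : ∀ v, G.degIn M v = 1) :
    G.HasNZkFlow 3 := by
  classical
  let d : E → Bool × Bool := fun e => if e ∈ M then (false, false) else (true, true)
  let φ : E → ℤ := fun e => if e ∈ M then 2 else 1
  have hval : ∀ h, halfVal d φ h = if h.1 ∈ M then -2 else 1 := by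
    rintro ⟨e, b⟩
    by_cases e ∈ M <;> cases b <;> simp [halfVal, halfDir, d, φ, *]
  refine ⟨d, φ, ⟨fun e => ?_, fun v => ?_⟩, fun e => ?_⟩
  · simp only [hneg e, true_iff, d]
    split_ifs <;> rfl
  · have hsplit := card_filter_add_card_filter_not (s := G.halfEdgesAt v) (·.1 ∈ M)
    rw [G.card_halfEdgesAt, hcubic, ← degIn_eq_card_halfEdgesAt, hM] at hsplit
    rw [vertexSum_eq_sum_halfVal, sum_congr rfl fun h _ => hval h, sum_ite, sum_const, sum_const,
      ← degIn_eq_card_halfEdgesAt, hM]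
    simp only [nsmul_eq_mul]
    omega
  · by_cases e ∈ M <;> simp [φ, *]

end Cubic

end SignedMultigraph

open SignedMultigraph in
theorem stmt_11_general {V E : Type} [Fintype E] [DecidableEq V]
    (G : SignedMultigraph V E) (hcubic : ∀ v : V, G.degIn Finset.univ v = 3) :
    G.HasNZkFlow 3 ↔
      G.Antibalanced ∧ ∃ M : Finset E, ∀ v : V, G.degIn M v = 1 := by
  refine ⟨G.antibalanced_and_perfectMatching_of_hasNZkFlow_three hcubic,
    fun ⟨⟨G', hequiv, hneg⟩, M, hM⟩ => ?_⟩
  rw [← hequiv.degIn_eq] at hcubic hM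
  exact .of_equivalent hequiv (G'.hasNZkFlow_three_of_forall_neg hneg hcubic M hM)

open SignedMultigraph in
/-- A signed cubic graph has a nowhere-zero 3-flow iff it is antibalanced and the
underlying graph has a perfect matching. -/
theorem stmt_11 {V E : Type} [Fintype V] [Fintype E] [DecidableEq V] [DecidableEq E]
    (G : SignedMultigraph V E) (hcubic : ∀ v : V, G.degIn Finset.univ v = 3) :
    G.HasNZkFlow 3 ↔
      G.Antibalanced ∧ ∃ M : Finset E, ∀ v : V, G.degIn M v = 1 :=
  stmt_11_general G hcubic
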